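/- If X is an infinite compact metric space, then for any p ∈ [1,∞] the normed space (M(X), ‖·‖_{pK}) is not complete. -/

import Mathlib

open MeasureTheory ENNReal Filter Topology

noncomputable section

/-- The two-dimensional `ℓ^p` expression, interpreted as a maximum when `p = ∞`. -/
def lp2 (p : ℝ≥0∞) (a b : ℝ) : ℝ :=
  if p = ∞ then max a b else (a ^ p.toReal + b ^ p.toReal) ^ (1 / p.toReal)

/-- Hölder conjugacy of `p, q ∈ [1, ∞]`. -/
def HolderConj (p q : ℝ≥0∞) : Prop := 1 ≤ p ∧ 1 ≤ q ∧ 1 / p + 1 / q = 1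

variable {X : Type*} [MeasurableSpace X]

/-- Total variation norm of a finite signed Borel measure. -/
def TVnorm (s : SignedMeasure X) : ℝ := (s.totalVariation Set.univ).toReal

/-- Integral of a function against a signed measure. -/
def sIntegral (s : SignedMeasure X) (f : X → ℝ) : ℝ :=
  ∫ x, f x ∂s.toJordanDecomposition.posPart - ∫ x, f x ∂s.toJordanDecomposition.negPart

/-- The Kantorovich–Rubinstein norm of a (zero-charge) signed measure. -/
def KRnorm [PseudoMetricSpace X] (ξ : SignedMeasure X) : ℝ :=
  sInf {r : ℝ | ∃ π : Measure (X × X), IsFiniteMeasure π ∧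
    (∀ A : Set X, MeasurableSet A →
      ξ A = (π (Set.univ ×ˢ A)).toReal - (π (A ×ˢ Set.univ)).toReal) ∧
    r = ∫ z, dist z.1 z.2 ∂π}

/-- The `p`-Kantorovich norm on finite signed measures. -/
def pKnorm [PseudoMetricSpace X] (p : ℝ≥0∞) (μ : SignedMeasure X) : ℝ :=
  sInf {r : ℝ | ∃ ξ : SignedMeasure X, ξ Set.univ = 0 ∧
    r = lp2 p (KRnorm ξ) (TVnorm (μ - ξ))}

/-- The Lipschitz constant (seminorm) of `f`. -/
def lipConst [PseudoMetricSpace X] (f : X → ℝ) : ℝ :=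
  sInf {K : ℝ | 0 ≤ K ∧ ∀ x y, |f x - f y| ≤ K * dist x y}

/-- The sup norm of `f`. -/
def supNorm (f : X → ℝ) : ℝ := ⨆ x, |f x|

/-- The `q`-Lipschitz norm. -/
def qLnorm [PseudoMetricSpace X] (q : ℝ≥0∞) (f : X → ℝ) : ℝ :=
  lp2 q (lipConst f) (supNorm f)

/-- The support of a measure: points all of whose open neighbourhoods have
positive measure. -/
def msupport {Y : Type*} [TopologicalSpace Y] [MeasurableSpace Y] (π : Measure Y) : Set Y :=
  {y | ∀ U : Set Y, IsOpen U → y ∈ U → π U ≠ 0}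

end

section lp2lemmas
variable {p : ℝ≥0∞} {a b : ℝ}

lemma toReal_one_le (hp : 1 ≤ p) (h : p ≠ ∞) : (1:ℝ) ≤ p.toReal := by
  simpa using ENNReal.toReal_mono h hp

lemma le_lp2_left (hp : 1 ≤ p) (ha : 0 ≤ a) (hb : 0 ≤ b) : a ≤ lp2 p a b := by
  unfold lp2
  split_ifs with h
  · exact le_max_left a b
  · have ht : (1:ℝ) ≤ p.toReal := toReal_one_le hp h
    have ht0 : p.toReal ≠ 0 := by linarith
    calc a = (a ^ p.toReal) ^ (1 / p.toReal) := by
            rw [← Real.rpow_mul ha, mul_one_div_cancel ht0, Real.rpow_one]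
      _ ≤ (a ^ p.toReal + b ^ p.toReal) ^ (1 / p.toReal) := by
            apply Real.rpow_le_rpow (Real.rpow_nonneg ha _)
            · nlinarith [Real.rpow_nonneg hb p.toReal]
            · positivity

lemma le_lp2_right (hp : 1 ≤ p) (ha : 0 ≤ a) (hb : 0 ≤ b) : b ≤ lp2 p a b := by
  unfold lp2
  split_ifs with h
  · exact le_max_right a b
  · have ht : (1:ℝ) ≤ p.toReal := toReal_one_le hp h
    have ht0 : p.toReal ≠ 0 := by linarith
    calc b = (b ^ p.toReal) ^ (1 / p.toReal) := by
            rw [← Real.rpow_mul hb, mul_one_div_cancel ht0, Real.rpow_one]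
      _ ≤ (a ^ p.toReal + b ^ p.toReal) ^ (1 / p.toReal) := by
            apply Real.rpow_le_rpow (Real.rpow_nonneg hb _)
            · nlinarith [Real.rpow_nonneg ha p.toReal]
            · positivity

lemma lp2_nonneg (hp : 1 ≤ p) (ha : 0 ≤ a) (hb : 0 ≤ b) : 0 ≤ lp2 p a b :=
  le_trans ha (le_lp2_left hp ha hb)

lemma lp2_zero_right (hp : 1 ≤ p) (ha : 0 ≤ a) : lp2 p a 0 = a := by
  unfold lp2
  split_ifs with h
  · exact max_eq_left ha
  · have ht : (1:ℝ) ≤ p.toReal := toReal_one_le hp h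
    have ht0 : p.toReal ≠ 0 := by linarith
    rw [Real.zero_rpow ht0, add_zero, ← Real.rpow_mul ha, mul_one_div_cancel ht0, Real.rpow_one]
end lp2lemmas

section integ
variable {Y : Type*} [TopologicalSpace Y] [CompactSpace Y] [MeasurableSpace Y]
  [OpensMeasurableSpace Y]

lemma cont_integrable (f : Y → ℝ) (hf : Continuous f) (μ : Measure Y) [IsFiniteMeasure μ] :
    Integrable f μ := by
  rcases isCompact_univ.exists_bound_of_continuousOn hf.continuousOn with ⟨C, hC⟩
  exact ⟨hf.aestronglyMeasurable,
    HasFiniteIntegral.of_bounded (C := C) (Filter.Eventually.of_forall fun y => hC y trivial)⟩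
end integ

section rep
variable {X : Type*} [TopologicalSpace X] [CompactSpace X] [MeasurableSpace X]
  [OpensMeasurableSpace X]

lemma sIntegral_eq_of_rep (s : SignedMeasure X) (a b : Measure X)
    [IsFiniteMeasure a] [IsFiniteMeasure b]
    (h : s = a.toSignedMeasure - b.toSignedMeasure) (f : X → ℝ) (hf : Continuous f) :
    sIntegral s f = ∫ x, f x ∂a - ∫ x, f x ∂b := by
  set P := s.toJordanDecomposition.posPart with hP
  set N := s.toJordanDecomposition.negPart with hN
  have hPN : s = P.toSignedMeasure - N.toSignedMeasure :=
    (s.toSignedMeasure_toJordanDecomposition).symm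
  have key : P + b = N + a := by
    ext A hA
    have e1 : s A = (P A).toReal - (N A).toReal := by
      rw [hPN]
      rw [MeasureTheory.VectorMeasure.sub_apply, Measure.toSignedMeasure_apply_measurable hA,
        Measure.toSignedMeasure_apply_measurable hA, measureReal_def, measureReal_def]
    have e2 : s A = (a A).toReal - (b A).toReal := by
      rw [h, MeasureTheory.VectorMeasure.sub_apply, Measure.toSignedMeasure_apply_measurable hA,
        Measure.toSignedMeasure_apply_measurable hA, measureReal_def, measureReal_def]
    have e3 : (P A).toReal + (b A).toReal = (N A).toReal + (a A).toReal := by linarith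
    have e4 : (P A + b A).toReal = (N A + a A).toReal := by
      rw [ENNReal.toReal_add (by finiteness) (by finiteness),
        ENNReal.toReal_add (by finiteness) (by finiteness)]
      exact e3
    have e5 := (ENNReal.toReal_eq_toReal_iff' (by finiteness) (by finiteness)).mp e4
    simpa [Measure.add_apply] using e5
  have hi : ∀ (μ : Measure X) (_ : IsFiniteMeasure μ), Integrable f μ := fun μ hμ =>
    cont_integrable f hf μ
  have e : ∫ x, f x ∂P + ∫ x, f x ∂b = ∫ x, f x ∂N + ∫ x, f x ∂a := by
    rw [← integral_add_measure (hi P inferInstance) (hi b inferInstance),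
      ← integral_add_measure (hi N inferInstance) (hi a inferInstance), key]
  simp only [sIntegral, ← hP, ← hN]
  linarith

omit [CompactSpace X] [OpensMeasurableSpace X] in
lemma sIntegral_tv_bound (s : SignedMeasure X) (f : X → ℝ)
    (S : ℝ) (hfS : ∀ y, |f y| ≤ S) : |sIntegral s f| ≤ S * TVnorm s := by
  set P := s.toJordanDecomposition.posPart with hP
  set N := s.toJordanDecomposition.negPart with hN
  have h1 : |∫ x, f x ∂P| ≤ S * (P Set.univ).toReal := by
    simpa [Real.norm_eq_abs, measureReal_def] using
      norm_integral_le_of_norm_le_const (μ := P) (f := f) (C := S)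
        (Filter.Eventually.of_forall fun y => by simpa [Real.norm_eq_abs] using hfS y)
  have h2 : |∫ x, f x ∂N| ≤ S * (N Set.univ).toReal := by
    simpa [Real.norm_eq_abs, measureReal_def] using
      norm_integral_le_of_norm_le_const (μ := N) (f := f) (C := S)
        (Filter.Eventually.of_forall fun y => by simpa [Real.norm_eq_abs] using hfS y)
  have hTV : TVnorm s = (P Set.univ).toReal + (N Set.univ).toReal := by
    simp only [TVnorm, MeasureTheory.SignedMeasure.totalVariation, Measure.add_apply]
    rw [ENNReal.toReal_add (by finiteness) (by finiteness)]
  rw [hTV]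
  calc |sIntegral s f| ≤ |∫ x, f x ∂P| + |∫ x, f x ∂N| := abs_sub _ _
    _ ≤ S * (P Set.univ).toReal + S * (N Set.univ).toReal := add_le_add h1 h2
    _ = S * ((P Set.univ).toReal + (N Set.univ).toReal) := by ring
end rep

section coupling
variable {X : Type*} [MetricSpace X] [CompactSpace X] [MeasurableSpace X] [BorelSpace X]

lemma marginal_fst (π : Measure (X × X)) [IsFiniteMeasure π] (A : Set X) (hA : MeasurableSet A) :
    π.map Prod.fst A = π (A ×ˢ Set.univ) := by
  rw [Measure.map_apply measurable_fst hA]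
  congr 1
  ext z
  simp

lemma marginal_snd (π : Measure (X × X)) [IsFiniteMeasure π] (A : Set X) (hA : MeasurableSet A) :
    π.map Prod.snd A = π (Set.univ ×ˢ A) := by
  rw [Measure.map_apply measurable_snd hA]
  congr 1
  ext z
  simp

/-- Lemma D: per-coupling bound on the integral of a Lipschitz function. -/
lemma abs_sIntegral_le_coupling (ξ : SignedMeasure X) (π : Measure (X × X)) [IsFiniteMeasure π]
    (hπ : ∀ A : Set X, MeasurableSet A →
      ξ A = (π (Set.univ ×ˢ A)).toReal - (π (A ×ˢ Set.univ)).toReal)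
    (f : X → ℝ) (hf : Continuous f) (L : ℝ) (hL : 0 ≤ L)
    (hfL : ∀ a b, |f a - f b| ≤ L * dist a b) :
    |sIntegral ξ f| ≤ L * ∫ z, dist z.1 z.2 ∂π := by
  set m1 := π.map Prod.fst with hm1
  set m2 := π.map Prod.snd with hm2
  haveI : IsFiniteMeasure m1 := Measure.isFiniteMeasure_map π Prod.fst
  haveI : IsFiniteMeasure m2 := Measure.isFiniteMeasure_map π Prod.snd
  have hrep : ξ = m2.toSignedMeasure - m1.toSignedMeasure := by
    apply MeasureTheory.VectorMeasure.ext
    intro A hA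
    rw [MeasureTheory.VectorMeasure.sub_apply, Measure.toSignedMeasure_apply_measurable hA,
      Measure.toSignedMeasure_apply_measurable hA, measureReal_def, measureReal_def, marginal_snd π A hA, marginal_fst π A hA]
    exact hπ A hA
  have e1 : sIntegral ξ f = ∫ x, f x ∂m2 - ∫ x, f x ∂m1 := sIntegral_eq_of_rep ξ m2 m1 hrep f hf
  have e2 : ∫ x, f x ∂m2 = ∫ z, f z.2 ∂π := by
    rw [hm2, integral_map measurable_snd.aemeasurable hf.aestronglyMeasurable]
  have e3 : ∫ x, f x ∂m1 = ∫ z, f z.1 ∂π := by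
    rw [hm1, integral_map measurable_fst.aemeasurable hf.aestronglyMeasurable]
  have hi2 : Integrable (fun z : X × X => f z.2) π :=
    cont_integrable _ (hf.comp continuous_snd) π
  have hi1 : Integrable (fun z : X × X => f z.1) π :=
    cont_integrable _ (hf.comp continuous_fst) π
  have hid : Integrable (fun z : X × X => dist z.1 z.2) π :=
    cont_integrable _ (continuous_fst.dist continuous_snd) π
  have e4 : sIntegral ξ f = ∫ z, (f z.2 - f z.1) ∂π := by
    rw [e1, e2, e3, integral_sub hi2 hi1]
  rw [e4]
  calc |∫ z, (f z.2 - f z.1) ∂π| ≤ ∫ z, |f z.2 - f z.1| ∂π := by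
        simpa [Real.norm_eq_abs] using
          norm_integral_le_integral_norm (μ := π) (fun z : X × X => f z.2 - f z.1)
    _ ≤ ∫ z, L * dist z.1 z.2 ∂π := by
        apply integral_mono (hi2.sub hi1).abs (hid.const_mul L)
        intro z
        calc |f z.2 - f z.1| ≤ L * dist z.2 z.1 := hfL _ _
          _ = L * dist z.1 z.2 := by rw [dist_comm]
    _ = L * ∫ z, dist z.1 z.2 ∂π := integral_const_mul L _

/-- Lemma E: the coupling set is nonempty for zero-charge measures. -/
lemma coupling_set_nonempty (ξ : SignedMeasure X) (hξ : ξ Set.univ = 0) :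
    ∃ r : ℝ, ∃ π : Measure (X × X), IsFiniteMeasure π ∧
      (∀ A : Set X, MeasurableSet A →
        ξ A = (π (Set.univ ×ˢ A)).toReal - (π (A ×ˢ Set.univ)).toReal) ∧
      r = ∫ z, dist z.1 z.2 ∂π := by
  set P := ξ.toJordanDecomposition.posPart with hP
  set N := ξ.toJordanDecomposition.negPart with hN
  have hPN : ξ = P.toSignedMeasure - N.toSignedMeasure :=
    (ξ.toSignedMeasure_toJordanDecomposition).symm
  have happ : ∀ A : Set X, MeasurableSet A → ξ A = (P A).toReal - (N A).toReal := by
    intro A hA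
    rw [hPN, MeasureTheory.VectorMeasure.sub_apply, Measure.toSignedMeasure_apply_measurable hA,
      Measure.toSignedMeasure_apply_measurable hA, measureReal_def, measureReal_def]
  set m := P Set.univ with hm
  have hmN : N Set.univ = m := by
    have := happ Set.univ MeasurableSet.univ
    rw [hξ] at this
    have h1 : (P Set.univ).toReal = (N Set.univ).toReal := by linarith
    exact ((ENNReal.toReal_eq_toReal_iff' (by finiteness) (by finiteness)).mp h1).symm
  set π : Measure (X × X) := m⁻¹ • (N.prod P) with hπdef
  haveI : IsFiniteMeasure π := by
    constructor
    rw [hπdef, Measure.smul_apply, smul_eq_mul, ← Set.univ_prod_univ, Measure.prod_prod, hmN, ← hm]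
    rcases eq_or_ne m 0 with h0 | h0
    · simp [h0]
    · have hmt : m ≠ ⊤ := by finiteness
      rw [← mul_assoc, ENNReal.inv_mul_cancel h0 hmt, one_mul]
      exact lt_top_iff_ne_top.mpr hmt
  refine ⟨∫ z, dist z.1 z.2 ∂π, π, inferInstance, ?_, rfl⟩
  intro A hA
  have hmt : m ≠ ⊤ := by finiteness
  rcases eq_or_ne m 0 with h0 | h0
  · have hPA : P A = 0 := le_antisymm (h0 ▸ measure_mono (Set.subset_univ A)) zero_le
    have hNA : N A = 0 := by
      have : N A ≤ N Set.univ := measure_mono (Set.subset_univ A)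
      rw [hmN, h0] at this
      exact le_antisymm this zero_le
    have hprod : N.prod P = 0 := by
      have : (N.prod P) Set.univ = 0 := by
        rw [← Set.univ_prod_univ, Measure.prod_prod, hmN, h0, zero_mul]
      exact Measure.measure_univ_eq_zero.mp this
    rw [happ A hA, hπdef, hprod]
    simp [hPA, hNA]
  · have e1 : π (Set.univ ×ˢ A) = P A := by
      rw [hπdef, Measure.smul_apply, smul_eq_mul, Measure.prod_prod, hmN,
        ← mul_assoc, ENNReal.inv_mul_cancel h0 hmt, one_mul]
    have e2 : π (A ×ˢ Set.univ) = N A := by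
      rw [hπdef, Measure.smul_apply, smul_eq_mul, Measure.prod_prod, ← hm,
        mul_comm (N A) m, ← mul_assoc, ENNReal.inv_mul_cancel h0 hmt, one_mul]
    rw [e1, e2, happ A hA]
end coupling

section duality
variable {X : Type*} [MetricSpace X] [CompactSpace X] [MeasurableSpace X] [BorelSpace X]

lemma KRnorm_nonneg (ξ : SignedMeasure X) : 0 ≤ KRnorm ξ := by
  apply Real.sInf_nonneg
  rintro r ⟨π, hπfin, hπ, rfl⟩
  exact integral_nonneg fun z => dist_nonneg

lemma TVnorm_nonneg (s : SignedMeasure X) : 0 ≤ TVnorm s := ENNReal.toReal_nonneg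

lemma sIntegral_add (s t : SignedMeasure X) (f : X → ℝ) (hf : Continuous f) :
    sIntegral (s + t) f = sIntegral s f + sIntegral t f := by
  set Ps := s.toJordanDecomposition.posPart
  set Ns := s.toJordanDecomposition.negPart
  set Pt := t.toJordanDecomposition.posPart
  set Nt := t.toJordanDecomposition.negPart
  have hs : s = Ps.toSignedMeasure - Ns.toSignedMeasure :=
    (s.toSignedMeasure_toJordanDecomposition).symm
  have ht : t = Pt.toSignedMeasure - Nt.toSignedMeasure :=
    (t.toSignedMeasure_toJordanDecomposition).symm
  have hst : s + t = (Ps + Pt).toSignedMeasure - (Ns + Nt).toSignedMeasure := by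
    rw [Measure.toSignedMeasure_add, Measure.toSignedMeasure_add]
    conv_lhs => rw [hs, ht]
    abel
  rw [sIntegral_eq_of_rep (s + t) _ _ hst f hf, sIntegral_eq_of_rep s _ _ hs f hf,
    sIntegral_eq_of_rep t _ _ ht f hf,
    integral_add_measure (cont_integrable f hf Ps) (cont_integrable f hf Pt),
    integral_add_measure (cont_integrable f hf Ns) (cont_integrable f hf Nt)]
  ring

lemma abs_sIntegral_le_KRnorm (ξ : SignedMeasure X) (hξ : ξ Set.univ = 0)
    (f : X → ℝ) (hf : Continuous f) (L : ℝ) (hL : 0 ≤ L)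
    (hfL : ∀ a b, |f a - f b| ≤ L * dist a b) :
    |sIntegral ξ f| ≤ (L + 1) * KRnorm ξ := by
  have hpos : (0:ℝ) < L + 1 := by linarith
  rw [← div_le_iff₀' hpos]
  apply le_csInf
  · obtain ⟨r, π, h⟩ := coupling_set_nonempty ξ hξ
    exact ⟨r, π, h⟩
  · rintro r ⟨π, hπfin, hπ, rfl⟩
    haveI := hπfin
    have h1 : |sIntegral ξ f| ≤ L * ∫ z, dist z.1 z.2 ∂π :=
      abs_sIntegral_le_coupling ξ π hπ f hf L hL hfL
    have h2 : (0:ℝ) ≤ ∫ z, dist z.1 z.2 ∂π := integral_nonneg fun z => dist_nonneg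
    rw [div_le_iff₀ hpos]
    nlinarith

lemma abs_sIntegral_le_pKnorm (p : ℝ≥0∞) (hp : 1 ≤ p) (μ : SignedMeasure X)
    (f : X → ℝ) (hf : Continuous f) (L S : ℝ) (hL : 0 ≤ L) (hS : 0 ≤ S)
    (hfL : ∀ a b, |f a - f b| ≤ L * dist a b) (hfS : ∀ y, |f y| ≤ S) :
    |sIntegral μ f| ≤ (L + S + 2) * pKnorm p μ := by
  have hpos : (0:ℝ) < L + S + 2 := by linarith
  rw [← div_le_iff₀' hpos]
  apply le_csInf
  · exact ⟨_, 0, by simp, rfl⟩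
  · rintro r ⟨ξ, hξ0, rfl⟩
    set K := KRnorm ξ
    set T := TVnorm (μ - ξ)
    have hK : 0 ≤ K := KRnorm_nonneg ξ
    have hT : 0 ≤ T := TVnorm_nonneg _
    have hKle : K ≤ lp2 p K T := le_lp2_left hp hK hT
    have hTle : T ≤ lp2 p K T := le_lp2_right hp hK hT
    have hsplit : sIntegral μ f = sIntegral ξ f + sIntegral (μ - ξ) f := by
      have h0 : ξ + (μ - ξ) = μ := by abel
      have h := sIntegral_add ξ (μ - ξ) f hf
      rw [h0] at h
      exact h
    have h1 : |sIntegral ξ f| ≤ (L + 1) * K := abs_sIntegral_le_KRnorm ξ hξ0 f hf L hL hfL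
    have h2 : |sIntegral (μ - ξ) f| ≤ S * T := sIntegral_tv_bound (μ - ξ) f S hfS
    have h3 : |sIntegral μ f| ≤ (L + 1) * K + S * T := by
      rw [hsplit]
      exact le_trans (abs_add_le _ _) (add_le_add h1 h2)
    rw [div_le_iff₀ hpos]
    have h5 : (L + 1) * K ≤ (L + 1) * lp2 p K T := by nlinarith
    have h6 : S * T ≤ (S + 1) * lp2 p K T := by nlinarith
    calc |sIntegral μ f| ≤ (L + 1) * K + S * T := h3
      _ ≤ (L + 1) * lp2 p K T + (S + 1) * lp2 p K T := add_le_add h5 h6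
      _ = lp2 p K T * (L + S + 2) := by ring
end duality

section diracsums
variable {Y : Type*} [MeasurableSpace Y]

lemma sumdirac_fin (I : Finset ℕ) (w : ℕ → ℝ≥0∞) (hw : ∀ k, w k ≠ ⊤) (pt : ℕ → Y) :
    IsFiniteMeasure (∑ k ∈ I, w k • Measure.dirac (pt k)) := by
  constructor
  rw [Measure.finset_sum_apply]
  refine ENNReal.sum_lt_top.mpr fun k _ => ?_
  rw [Measure.smul_apply, smul_eq_mul]
  exact ENNReal.mul_lt_top (lt_top_iff_ne_top.mpr (hw k)) (by simp [Measure.dirac_apply_of_mem])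

lemma sumdirac_apply (I : Finset ℕ) (w : ℕ → ℝ≥0∞) (pt : ℕ → Y) (A : Set Y)
    (hA : MeasurableSet A) :
    (∑ k ∈ I, w k • Measure.dirac (pt k)) A = ∑ k ∈ I, w k * A.indicator 1 (pt k) := by
  rw [Measure.finset_sum_apply]
  congr 1
  ext k
  rw [Measure.smul_apply, smul_eq_mul, Measure.dirac_apply' _ hA]

lemma sumdirac_apply_toReal (I : Finset ℕ) (w : ℕ → ℝ≥0∞) (hw : ∀ k, w k ≠ ⊤) (pt : ℕ → Y)
    (A : Set Y) (hA : MeasurableSet A) :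
    ((∑ k ∈ I, w k • Measure.dirac (pt k)) A).toReal
      = ∑ k ∈ I, (w k).toReal * A.indicator 1 (pt k) := by
  have hne : ∀ k ∈ I, w k * A.indicator 1 (pt k) ≠ ⊤ := by
    intro k _
    by_cases h : pt k ∈ A <;>
      simp [Set.indicator_of_mem, Set.indicator_of_notMem, h, ENNReal.mul_ne_top (hw k), hw k]
  rw [sumdirac_apply I w pt A hA, ENNReal.toReal_sum hne]
  apply Finset.sum_congr rfl
  intro k _
  by_cases h : pt k ∈ A <;>
    simp [Set.indicator_of_mem, Set.indicator_of_notMem, h, ENNReal.toReal_mul]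

variable [TopologicalSpace Y] [CompactSpace Y] [BorelSpace Y] [MeasurableSingletonClass Y]


lemma integral_sumdirac (I : Finset ℕ) (w : ℕ → ℝ≥0∞) (hw : ∀ k, w k ≠ ⊤) (pt : ℕ → Y)
    (g : Y → ℝ) (hg : Continuous g) :
    ∫ y, g y ∂(∑ k ∈ I, w k • Measure.dirac (pt k)) = ∑ k ∈ I, (w k).toReal * g (pt k) := by
  rw [integral_finset_sum_measure]
  · congr 1
    ext k
    rw [integral_smul_measure, integral_dirac, smul_eq_mul]
  · intro k _
    exact (cont_integrable g hg (Measure.dirac (pt k))).smul_measure (hw k)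
end diracsums

section krle
variable {X : Type*} [MetricSpace X] [CompactSpace X] [MeasurableSpace X] [BorelSpace X]

lemma KRnorm_le_sumdirac (I : Finset ℕ) (w : ℕ → ℝ≥0∞) (hw : ∀ k, w k ≠ ⊤) (u v : ℕ → X)
    (ξ : SignedMeasure X)
    (hξ : ∀ A : Set X, MeasurableSet A →
      ξ A = ((∑ k ∈ I, w k • Measure.dirac (u k)) A).toReal
            - ((∑ k ∈ I, w k • Measure.dirac (v k)) A).toReal) :
    KRnorm ξ ≤ ∑ k ∈ I, (w k).toReal * dist (v k) (u k) := by
  set π : Measure (X × X) := ∑ k ∈ I, w k • Measure.dirac (v k, u k) with hπdef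
  haveI : IsFiniteMeasure π := sumdirac_fin I w hw (fun k => (v k, u k))
  have hbdd : BddBelow {r : ℝ | ∃ π : Measure (X × X), IsFiniteMeasure π ∧
      (∀ A : Set X, MeasurableSet A →
        ξ A = (π (Set.univ ×ˢ A)).toReal - (π (A ×ˢ Set.univ)).toReal) ∧
      r = ∫ z, dist z.1 z.2 ∂π} := by
    refine ⟨0, ?_⟩
    rintro r ⟨π', hfin', hπ', rfl⟩
    exact integral_nonneg fun z => dist_nonneg
  have hmem : (∑ k ∈ I, (w k).toReal * dist (v k) (u k)) ∈ {r : ℝ | ∃ π : Measure (X × X),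
      IsFiniteMeasure π ∧ (∀ A : Set X, MeasurableSet A →
        ξ A = (π (Set.univ ×ˢ A)).toReal - (π (A ×ˢ Set.univ)).toReal) ∧
      r = ∫ z, dist z.1 z.2 ∂π} := by
    refine ⟨π, inferInstance, ?_, ?_⟩
    · intro A hA
      have h1 : π (Set.univ ×ˢ A) = (∑ k ∈ I, w k • Measure.dirac (u k)) A := by
        rw [hπdef, Measure.finset_sum_apply, Measure.finset_sum_apply]
        apply Finset.sum_congr rfl
        intro k _
        rw [Measure.smul_apply, Measure.smul_apply, smul_eq_mul, smul_eq_mul,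
          Measure.dirac_apply' _ (MeasurableSet.univ.prod hA), Measure.dirac_apply' _ hA]
        congr 1
        by_cases h : u k ∈ A <;>
          simp [Set.indicator_of_mem, Set.indicator_of_notMem, h, Set.mem_prod]
      have h2 : π (A ×ˢ Set.univ) = (∑ k ∈ I, w k • Measure.dirac (v k)) A := by
        rw [hπdef, Measure.finset_sum_apply, Measure.finset_sum_apply]
        apply Finset.sum_congr rfl
        intro k _
        rw [Measure.smul_apply, Measure.smul_apply, smul_eq_mul, smul_eq_mul,
          Measure.dirac_apply' _ (hA.prod MeasurableSet.univ), Measure.dirac_apply' _ hA]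
        congr 1
        by_cases h : v k ∈ A <;>
          simp [Set.indicator_of_mem, Set.indicator_of_notMem, h, Set.mem_prod]
      rw [h1, h2]
      exact hξ A hA
    · rw [hπdef, integral_sumdirac I w hw _ _ (continuous_fst.dist continuous_snd)]
  exact csInf_le hbdd hmem
end krle

-- ## additional small lemmas
section small
variable {X : Type*} [MetricSpace X] [CompactSpace X] [MeasurableSpace X] [BorelSpace X]

lemma TVnorm_zero : TVnorm (0 : SignedMeasure X) = 0 := by
  simp [TVnorm, MeasureTheory.SignedMeasure.totalVariation_zero]

lemma pKnorm_nonneg (p : ℝ≥0∞) (hp : 1 ≤ p) (μ : SignedMeasure X) : 0 ≤ pKnorm p μ := by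
  apply Real.sInf_nonneg
  rintro r ⟨ξ, hξ, rfl⟩
  exact lp2_nonneg hp (KRnorm_nonneg ξ) (TVnorm_nonneg _)

lemma pKnorm_le_KRnorm (p : ℝ≥0∞) (hp : 1 ≤ p) (s : SignedMeasure X) (hs : s Set.univ = 0) :
    pKnorm p s ≤ KRnorm s := by
  apply csInf_le
  · refine ⟨0, ?_⟩
    rintro r ⟨ξ, hξ, rfl⟩
    exact lp2_nonneg hp (KRnorm_nonneg ξ) (TVnorm_nonneg _)
  · refine ⟨s, hs, ?_⟩
    rw [sub_self, TVnorm_zero, lp2_zero_right hp (KRnorm_nonneg s)]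
end small


/-- If `X` is an infinite compact metric space, then `(M(X), ‖·‖_{pK})` is not
complete: there is a Cauchy sequence with no limit. -/

theorem pKnorm_not_complete {X : Type*} [MetricSpace X] [CompactSpace X] [Infinite X]
    [MeasurableSpace X] [BorelSpace X] (p : ℝ≥0∞) (hp : 1 ≤ p) :
    ∃ μ : ℕ → SignedMeasure X,
      (∀ ε : ℝ, 0 < ε → ∃ N, ∀ m ≥ N, ∀ n ≥ N, pKnorm p (μ m - μ n) < ε) ∧
      ¬ ∃ ν : SignedMeasure X,
        Filter.Tendsto (fun n => pKnorm p (μ n - ν)) Filter.atTop (𝓝 0) := by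
  classical
  -- a non-isolated point
  obtain ⟨x₀, hx₀⟩ : ∃ x : X, (nhdsWithin x {x}ᶜ).NeBot := by
    by_contra h
    push_neg at h
    have hd : DiscreteTopology X := by
      rw [discreteTopology_iff_nhds_ne]
      intro x
      have := h x
      simpa [Filter.not_neBot] using this
    have : Finite X := finite_of_compact_of_discrete
    exact absurd this (by simpa using (not_finite X))
  -- a selection of nearby points
  have hsel : ∀ k : ℕ, ∃ z : X, z ≠ x₀ ∧ dist z x₀ < (1/2 : ℝ)^k := by
    intro k
    have hb : Metric.ball x₀ ((1/2 : ℝ)^k) ∈ 𝓝 x₀ := Metric.ball_mem_nhds _ (by positivity)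
    have hmem : Metric.ball x₀ ((1/2 : ℝ)^k) ∩ {x₀}ᶜ ∈ nhdsWithin x₀ {x₀}ᶜ :=
      Filter.inter_mem (mem_nhdsWithin_of_mem_nhds hb) self_mem_nhdsWithin
    obtain ⟨z, hz⟩ := Filter.nonempty_of_mem hmem
    exact ⟨z, hz.2, by simpa [Metric.mem_ball] using hz.1⟩
  choose y hy1 hy2 using hsel
  set d : ℕ → ℝ := fun k => dist (y k) x₀ with hddef
  have hd0 : ∀ k, 0 < d k := fun k => dist_pos.2 (hy1 k)
  have hdle : ∀ k, d k ≤ (1/2 : ℝ)^k := fun k => (hy2 k).le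
  set c : ℕ → ℝ := fun k => (1/2 : ℝ)^k / d k with hcdef
  have hc1 : ∀ k, 1 ≤ c k := fun k => (one_le_div (hd0 k)).2 (hdle k)
  have hc0 : ∀ k, 0 ≤ c k := fun k => le_trans zero_le_one (hc1 k)
  have hcd : ∀ k, c k * d k = (1/2 : ℝ)^k := fun k => div_mul_cancel₀ _ (hd0 k).ne'
  set C : ℕ → ℝ≥0∞ := fun k => ENNReal.ofReal (c k) with hCdef
  have hCt : ∀ k, C k ≠ ⊤ := fun k => ofReal_ne_top
  have hCr : ∀ k, (C k).toReal = c k := fun k => toReal_ofReal (hc0 k)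
  set T : Finset ℕ → (ℕ → X) → Measure X :=
    fun I pt => ∑ k ∈ I, C k • Measure.dirac (pt k) with hTdef
  have inst : ∀ I pt, IsFiniteMeasure (T I pt) := fun I pt => sumdirac_fin I C hCt pt
  set μ : ℕ → SignedMeasure X := fun n =>
    @Measure.toSignedMeasure X _ (T (Finset.range n) y) (inst _ _)
    - @Measure.toSignedMeasure X _ (T (Finset.range n) (fun _ => x₀)) (inst _ _) with hμdef
  -- evaluation of μ n on measurable sets
  have happly : ∀ (n : ℕ) (A : Set X), MeasurableSet A → μ n A =
      (∑ k ∈ Finset.range n, c k * A.indicator 1 (y k))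
      - (∑ k ∈ Finset.range n, c k * A.indicator 1 x₀) := by
    intro n A hA
    haveI := inst (Finset.range n) y
    haveI := inst (Finset.range n) (fun _ => x₀)
    rw [hμdef]
    rw [MeasureTheory.VectorMeasure.sub_apply,
      Measure.toSignedMeasure_apply_measurable hA, Measure.toSignedMeasure_apply_measurable hA,
      measureReal_def, measureReal_def, hTdef]
    rw [sumdirac_apply_toReal _ _ hCt _ _ hA, sumdirac_apply_toReal _ _ hCt _ _ hA]
    simp only [hCr]
  -- μ's have zero total charge differences, and the difference evaluation
  have hdiff : ∀ n m : ℕ, n ≤ m → ∀ (A : Set X), MeasurableSet A →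
      ((μ m - μ n) A =
        ((T (Finset.Ico n m) y) A).toReal - ((T (Finset.Ico n m) (fun _ => x₀)) A).toReal ∧
       (μ n - μ m) A =
        ((T (Finset.Ico n m) (fun _ => x₀)) A).toReal - ((T (Finset.Ico n m) y) A).toReal) := by
    intro n m hnm A hA
    have e1 := happly n A hA
    have e2 := happly m A hA
    have e3 : ((T (Finset.Ico n m) y) A).toReal
        = ∑ k ∈ Finset.Ico n m, c k * A.indicator 1 (y k) := by
      rw [hTdef, sumdirac_apply_toReal _ _ hCt _ _ hA]; simp only [hCr]
    have e4 : ((T (Finset.Ico n m) (fun _ => x₀)) A).toReal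
        = ∑ k ∈ Finset.Ico n m, c k * A.indicator 1 x₀ := by
      rw [hTdef, sumdirac_apply_toReal _ _ hCt _ _ hA]; simp only [hCr]
    have e5 : ∑ k ∈ Finset.Ico n m, c k * A.indicator 1 (y k)
        = ∑ k ∈ Finset.range m, c k * A.indicator 1 (y k)
          - ∑ k ∈ Finset.range n, c k * A.indicator 1 (y k) :=
      Finset.sum_Ico_eq_sub _ hnm
    have e6 : ∑ k ∈ Finset.Ico n m, c k * A.indicator 1 x₀
        = ∑ k ∈ Finset.range m, c k * A.indicator 1 x₀
          - ∑ k ∈ Finset.range n, c k * A.indicator 1 x₀ :=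
      Finset.sum_Ico_eq_sub _ hnm
    constructor
    · rw [MeasureTheory.VectorMeasure.sub_apply, e1, e2, e3, e4, e5, e6]; ring
    · rw [MeasureTheory.VectorMeasure.sub_apply, e1, e2, e3, e4, e5, e6]; ring
  have hcharge : ∀ n m : ℕ, (μ m - μ n) Set.univ = 0 := by
    intro n m
    have h1 := happly n Set.univ MeasurableSet.univ
    have h2 := happly m Set.univ MeasurableSet.univ
    rw [MeasureTheory.VectorMeasure.sub_apply, h1, h2]
    simp [Set.indicator_univ]
  -- geometric bound
  have hgeo : ∀ n m : ℕ, n ≤ m →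
      ∑ k ∈ Finset.Ico n m, (C k).toReal * d k ≤ 2 * (1/2 : ℝ)^n := by
    intro n m hnm
    have e0 : ∀ k, (C k).toReal * d k = (1/2 : ℝ)^k := fun k => by rw [hCr]; exact hcd k
    calc ∑ k ∈ Finset.Ico n m, (C k).toReal * d k
        = ∑ k ∈ Finset.Ico n m, (1/2 : ℝ)^k := by
          exact Finset.sum_congr rfl fun k _ => e0 k
      _ = ∑ j ∈ Finset.range (m - n), (1/2 : ℝ)^(n + j) := Finset.sum_Ico_eq_sum_range _ n m
      _ = (1/2 : ℝ)^n * ∑ j ∈ Finset.range (m - n), (1/2 : ℝ)^j := by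
          rw [Finset.mul_sum]
          exact Finset.sum_congr rfl fun j _ => by rw [pow_add]
      _ ≤ (1/2 : ℝ)^n * 2 := by
          have := sum_geometric_two_le (m - n)
          have h0 : (0:ℝ) ≤ (1/2 : ℝ)^n := by positivity
          nlinarith
      _ = 2 * (1/2 : ℝ)^n := by ring
  -- the Cauchy-type bound
  have key : ∀ n m : ℕ, n ≤ m → pKnorm p (μ m - μ n) ≤ 2 * (1/2 : ℝ)^n
      ∧ pKnorm p (μ n - μ m) ≤ 2 * (1/2 : ℝ)^n := by
    intro n m hnm
    have hb1 : KRnorm (μ m - μ n) ≤ ∑ k ∈ Finset.Ico n m, (C k).toReal * dist x₀ (y k) :=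
      KRnorm_le_sumdirac (Finset.Ico n m) C hCt y (fun _ => x₀) _
        (fun A hA => (hdiff n m hnm A hA).1)
    have hb2 : KRnorm (μ n - μ m) ≤ ∑ k ∈ Finset.Ico n m, (C k).toReal * dist (y k) x₀ :=
      KRnorm_le_sumdirac (Finset.Ico n m) C hCt (fun _ => x₀) y _
        (fun A hA => (hdiff n m hnm A hA).2)
    have hdsymm : ∀ k, dist x₀ (y k) = d k := fun k => by rw [hddef]; exact dist_comm _ _
    constructor
    · refine le_trans (pKnorm_le_KRnorm p hp _ (hcharge n m)) (le_trans hb1 ?_)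
      refine le_trans (le_of_eq (Finset.sum_congr rfl fun k _ => by rw [hdsymm k])) ?_
      exact hgeo n m hnm
    · have h0 := hcharge m n
      exact le_trans (pKnorm_le_KRnorm p hp (μ n - μ m) h0) (le_trans hb2 (hgeo n m hnm))
  refine ⟨μ, ?_, ?_⟩
  · -- Cauchy
    intro ε hε
    obtain ⟨N, hN⟩ : ∃ N : ℕ, (1/2 : ℝ)^N < ε/2 := by
      rcases exists_pow_lt_of_lt_one (by positivity : (0:ℝ) < ε/2) (by norm_num : (1/2:ℝ) < 1)
        with ⟨N, hN⟩
      exact ⟨N, hN⟩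
    refine ⟨N, fun m hm n hn => ?_⟩
    have hpow : ∀ j : ℕ, N ≤ j → (1/2 : ℝ)^j ≤ (1/2 : ℝ)^N := fun j hj =>
      pow_le_pow_of_le_one (by norm_num) (by norm_num) hj
    rcases le_total n m with h | h
    · calc pKnorm p (μ m - μ n) ≤ 2 * (1/2 : ℝ)^n := (key n m h).1
        _ ≤ 2 * (1/2 : ℝ)^N := by nlinarith [hpow n hn]
        _ < ε := by linarith
    · calc pKnorm p (μ m - μ n) ≤ 2 * (1/2 : ℝ)^m := (key m n h).2
        _ ≤ 2 * (1/2 : ℝ)^N := by nlinarith [hpow m hm]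
        _ < ε := by linarith
  · -- no limit
    rintro ⟨ν, hν⟩
    set Tν : ℝ := TVnorm ν with hTν
    set N : ℕ := ⌈Tν⌉₊ + 2 with hNdef
    obtain ⟨δ, hδ0, hδle⟩ : ∃ δ : ℝ, 0 < δ ∧ ∀ k < N, δ ≤ d k := by
      have : ∀ M : ℕ, ∃ δ : ℝ, 0 < δ ∧ ∀ k < M, δ ≤ d k := by
        intro M
        induction M with
        | zero => exact ⟨1, one_pos, fun k hk => absurd hk (by omega)⟩
        | succ M ih =>
          obtain ⟨δ, hδ0, hδ⟩ := ih
          refine ⟨min δ (d M), lt_min hδ0 (hd0 M), fun k hk => ?_⟩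
          rcases Nat.lt_succ_iff_lt_or_eq.mp hk with h | h
          · exact le_trans (min_le_left _ _) (hδ k h)
          · subst h; exact min_le_right _ _
      exact this N
    set f : X → ℝ := fun z => min 1 ((1/δ) * dist z x₀) with hfdef
    have hfc : Continuous f :=
      continuous_const.min (continuous_const.mul (Continuous.dist continuous_id continuous_const))
    have hfL : ∀ a b : X, |f a - f b| ≤ (1/δ) * dist a b := by
      intro a b
      have h1 : |f a - f b| ≤ max |(1:ℝ) - 1| |(1/δ) * dist a x₀ - (1/δ) * dist b x₀| :=
        abs_min_sub_min_le_max _ _ _ _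
      have h2 : |(1/δ) * dist a x₀ - (1/δ) * dist b x₀| ≤ (1/δ) * dist a b := by
        rw [← mul_sub, abs_mul, abs_of_pos (by positivity : (0:ℝ) < 1/δ)]
        exact mul_le_mul_of_nonneg_left (abs_dist_sub_le a b x₀) (by positivity)
      simpa using le_trans h1 (by simpa using h2)
    have hf0 : ∀ z, 0 ≤ f z := fun z => le_min zero_le_one (by positivity)
    have hf1 : ∀ z, f z ≤ 1 := fun z => min_le_left _ _
    have hfS : ∀ z, |f z| ≤ 1 := fun z => abs_le.2 ⟨by linarith [hf0 z], hf1 z⟩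
    have hfx₀ : f x₀ = 0 := by simp [hfdef, dist_self]
    have hfyk : ∀ k, k < N → f (y k) = 1 := by
      intro k hk
      have h1 : 1 ≤ (1/δ) * dist (y k) x₀ := by
        rw [one_div, inv_mul_eq_div, one_le_div hδ0]
        exact hδle k hk
      exact min_eq_left h1
    set Cf : ℝ := (1/δ) + 1 + 2 with hCf
    have hCfpos : 0 < Cf := by rw [hCf]; positivity
    -- choose n
    obtain ⟨N', hN'⟩ := (Metric.tendsto_atTop.mp hν) (1/Cf) (by positivity)
    set n : ℕ := max N N' with hndef
    have hnN : N ≤ n := le_max_left _ _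
    have hpK : pKnorm p (μ n - ν) < 1/Cf := by
      have := hN' n (le_max_right _ _)
      rwa [Real.dist_eq, sub_zero, abs_of_nonneg (pKnorm_nonneg p hp _)] at this
    have hdual : |sIntegral (μ n - ν) f| ≤ Cf * pKnorm p (μ n - ν) := by
      have := abs_sIntegral_le_pKnorm p hp (μ n - ν) f hfc (1/δ) 1
        (by positivity) zero_le_one hfL hfS
      exact this
    have h2 : |sIntegral (μ n - ν) f| < 1 := by
      calc |sIntegral (μ n - ν) f| ≤ Cf * pKnorm p (μ n - ν) := hdual
        _ < Cf * (1/Cf) := by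
            exact mul_lt_mul_of_pos_left hpK hCfpos
        _ = 1 := by field_simp
    -- compute sIntegral (μ n) f
    have hμint : sIntegral (μ n) f
        = ∑ k ∈ Finset.range n, c k * f (y k) - ∑ k ∈ Finset.range n, c k * f x₀ := by
      haveI := inst (Finset.range n) y
      haveI := inst (Finset.range n) (fun _ => x₀)
      have hrep : μ n =
          (T (Finset.range n) y).toSignedMeasure
          - (T (Finset.range n) (fun _ => x₀)).toSignedMeasure := by rw [hμdef]
      rw [sIntegral_eq_of_rep (μ n) _ _ hrep f hfc, hTdef,
        integral_sumdirac _ _ hCt _ _ hfc, integral_sumdirac _ _ hCt _ _ hfc]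
      simp only [hCr]
    have hsub : sIntegral (μ n) f = sIntegral (μ n - ν) f + sIntegral ν f := by
      have h0 : (μ n - ν) + ν = μ n := by abel
      have := sIntegral_add (μ n - ν) ν f hfc
      rw [h0] at this
      exact this
    have hboundν : |sIntegral ν f| ≤ Tν := by
      have := sIntegral_tv_bound ν f 1 hfS
      rwa [one_mul] at this
    have hlow : (N : ℝ) ≤ sIntegral (μ n) f := by
      rw [hμint, hfx₀]
      simp only [mul_zero, Finset.sum_const_zero, sub_zero]
      calc (N : ℝ) = ∑ _k ∈ Finset.range N, (1:ℝ) := by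
            rw [Finset.sum_const, Finset.card_range]; simp
        _ ≤ ∑ k ∈ Finset.range N, c k * f (y k) := by
            apply Finset.sum_le_sum
            intro k hk
            rw [hfyk k (Finset.mem_range.mp hk), mul_one]
            exact hc1 k
        _ ≤ ∑ k ∈ Finset.range n, c k * f (y k) := by
            apply Finset.sum_le_sum_of_subset_of_nonneg
            · exact Finset.range_subset_range.mpr hnN
            · intro k _ _
              exact mul_nonneg (hc0 k) (hf0 _)
    have hNge : Tν + 2 ≤ (N : ℝ) := by
      rw [hNdef]
      push_cast
      have := Nat.le_ceil Tν
      linarith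
    have hup : sIntegral (μ n) f ≤ 1 + Tν := by
      calc sIntegral (μ n) f = sIntegral (μ n - ν) f + sIntegral ν f := hsub
        _ ≤ |sIntegral (μ n - ν) f| + |sIntegral ν f| :=
            add_le_add (le_abs_self _) (le_abs_self _)
        _ ≤ 1 + Tν := add_le_add h2.le hboundν
    linarith
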